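/- Let ν ≥ 1 and x > 0. Then K_{ν-1}(x)·K_{ν+1}(x) > K_ν(x)², where K_μ is the modified Bessel function of the second kind. -/

import Mathlib

open MeasureTheory Real Set Filter

noncomputable section

/-- The modified Bessel function of the second kind (Macdonald function), via the standard
integral representation `K_ν(x) = ∫_0^∞ exp(-x cosh t) cosh(ν t) dt` (for `x > 0`). -/
def besselK (ν x : ℝ) : ℝ :=
  ∫ t in Ioi (0 : ℝ), Real.exp (-x * Real.cosh t) * Real.cosh (ν * t)

/-!
The integrands `exp(-x cosh t) cosh(μ t)` of `K_{ν-1}, K_ν, K_{ν+1}` share the weight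
`exp(-x cosh t)`, and `cosh((ν-1)t) cosh((ν+1)t) = cosh(νt)² + sinh(t)² > cosh(νt)²` for `t > 0`,
so the Cauchy–Schwarz inequality for the three integrals holds strictly.
-/

namespace Real

lemma cosh_sub_mul_cosh_add (a b : ℝ) :
    cosh (a - b) * cosh (a + b) = cosh a ^ 2 + sinh b ^ 2 := by
  rw [cosh_sub, cosh_add]
  nlinarith [cosh_sq_sub_sinh_sq a, cosh_sq_sub_sinh_sq b]

lemma cosh_le_exp_abs (y : ℝ) : cosh y ≤ exp |y| := by
  rw [← cosh_abs, cosh_eq]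
  linarith [exp_le_exp.2 (neg_le_self (abs_nonneg y))]

lemma exp_div_two_le_cosh (t : ℝ) : exp t / 2 ≤ cosh t := by
  rw [cosh_eq]
  linarith [exp_pos (-t)]

end Real

namespace MeasureTheory

variable {α : Type*} [MeasurableSpace α] {μ : Measure α} [NeZero μ]

lemma integral_pos_of_ae_pos {f : α → ℝ} (hf : Integrable f μ) (hpos : ∀ᵐ a ∂μ, 0 < f a) :
    0 < ∫ a, f a ∂μ := by
  have hnonneg : 0 ≤ᵐ[μ] f := hpos.mono fun _ h => h.le
  refine (integral_nonneg_of_ae hnonneg).lt_of_ne fun hzero => NeZero.ne μ ?_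
  have hf0 := (integral_eq_zero_iff_of_nonneg_ae hnonneg hf).1 hzero.symm
  rw [← ae_eq_bot, ← eventually_false_iff_eq_bot]
  filter_upwards [hpos, hf0] with a ha ha0
  simp [ha0] at ha

theorem sq_integral_lt_integral_mul_integral {f g h : α → ℝ} (hf : Integrable f μ)
    (hg : Integrable g μ) (hh : Integrable h μ) (hf_pos : ∀ᵐ a ∂μ, 0 < f a)
    (hfgh : ∀ᵐ a ∂μ, g a ^ 2 < f a * h a) :
    (∫ a, g a ∂μ) ^ 2 < (∫ a, f a ∂μ) * ∫ a, h a ∂μ := by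
  set F := ∫ a, f a ∂μ
  set G := ∫ a, g a ∂μ
  set H := ∫ a, h a ∂μ
  have hF : 0 < F := integral_pos_of_ae_pos hf hf_pos
  -- The quadratic `c² F - 2 c G + H` is the integral of `c² f - 2 c g + h > 0`; take `c = G / F`.
  set c := G / F
  have hquad : 0 < c ^ 2 * F - 2 * c * G + H := by
    have hfg : Integrable (fun a => c ^ 2 * f a - 2 * c * g a) μ :=
      (hf.const_mul _).sub (hg.const_mul _)
    have hpos : ∀ᵐ a ∂μ, 0 < c ^ 2 * f a - 2 * c * g a + h a := by
      filter_upwards [hf_pos, hfgh] with a hfa hga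
      have : 0 < f a * (c ^ 2 * f a - 2 * c * g a + h a) := by
        nlinarith [sq_nonneg (c * f a - g a)]
      exact pos_of_mul_pos_right this hfa.le
    have := integral_pos_of_ae_pos
      (f := fun a => c ^ 2 * f a - 2 * c * g a + h a) (hfg.add hh) hpos
    rwa [integral_add hfg hh, integral_sub (hf.const_mul _) (hg.const_mul _),
      integral_const_mul, integral_const_mul] at this
  have hc : c * F = G := div_mul_cancel₀ G hF.ne'
  nlinarith

end MeasureTheory

lemma integrableOn_besselK_integrand (μ : ℝ) {x : ℝ} (hx : 0 < x) :
    IntegrableOn (fun t => exp (-x * cosh t) * cosh (μ * t)) (Ioi 0) := by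
  refine integrable_of_isBigO_exp_neg (a := 0) (b := 1) one_pos (by fun_prop) ?_
  refine Asymptotics.IsBigO.of_bound 1 ?_
  have hlin : ∀ᶠ t in atTop, (|μ| + 1) * t ≤ x / 2 * exp t := by
    filter_upwards [(tendsto_exp_div_pow_atTop 1).eventually_ge_atTop (2 * (|μ| + 1) / x),
      eventually_gt_atTop 0] with t ht ht0
    rw [pow_one, div_le_div_iff₀ hx ht0] at ht
    linarith
  filter_upwards [hlin, eventually_ge_atTop 0] with t hlin ht
  have hcosh : cosh (μ * t) ≤ exp (|μ| * t) := by
    simpa [abs_mul, abs_of_nonneg ht] using cosh_le_exp_abs (μ * t)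
  have hexp : |μ| * t - x * cosh t ≤ -t := by nlinarith [exp_div_two_le_cosh t]
  rw [Real.norm_of_nonneg (by positivity), Real.norm_of_nonneg (exp_pos _).le, one_mul]
  calc exp (-x * cosh t) * cosh (μ * t)
      ≤ exp (-x * cosh t) * exp (|μ| * t) := by gcongr
    _ = exp (|μ| * t - x * cosh t) := by rw [← exp_add]; ring_nf
    _ ≤ exp (-1 * t) := exp_le_exp.2 (by linarith)

lemma besselK_integrand_sq_lt (ν x : ℝ) {t : ℝ} (ht : t ≠ 0) :
    (exp (-x * cosh t) * cosh (ν * t)) ^ 2 <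
      exp (-x * cosh t) * cosh ((ν - 1) * t) * (exp (-x * cosh t) * cosh ((ν + 1) * t)) := by
  have hprod : cosh ((ν - 1) * t) * cosh ((ν + 1) * t) = cosh (ν * t) ^ 2 + sinh t ^ 2 := by
    rw [sub_mul, add_mul, one_mul, cosh_sub_mul_cosh_add]
  have hsinh : 0 < sinh t ^ 2 := by positivity [sinh_ne_zero.2 ht]
  calc (exp (-x * cosh t) * cosh (ν * t)) ^ 2
      < exp (-x * cosh t) ^ 2 * (cosh (ν * t) ^ 2 + sinh t ^ 2) := by
        rw [mul_pow]; gcongr; linarith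
    _ = _ := by rw [← hprod]; ring

theorem statement19_general (ν : ℝ) (x : ℝ) (hx : 0 < x) :
    besselK (ν - 1) x * besselK (ν + 1) x > (besselK ν x) ^ 2 := by
  have : NeZero (volume.restrict (Ioi (0 : ℝ))) := ⟨by simp⟩
  exact sq_integral_lt_integral_mul_integral (integrableOn_besselK_integrand _ hx)
    (integrableOn_besselK_integrand _ hx) (integrableOn_besselK_integrand _ hx)
    (ae_restrict_of_forall_mem measurableSet_Ioi fun t _ => by positivity)
    (ae_restrict_of_forall_mem measurableSet_Ioi fun t ht =>
      besselK_integrand_sq_lt ν x (ne_of_gt ht))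

/-- Turán-type inequality: for `ν ≥ 1` and `x > 0`, `K_{ν-1}(x) K_{ν+1}(x) > K_ν(x)²`. -/
theorem statement19 (ν : ℝ) (hν : 1 ≤ ν) (x : ℝ) (hx : 0 < x) :
    besselK (ν - 1) x * besselK (ν + 1) x > (besselK ν x) ^ 2 :=
  statement19_general ν x hx
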